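/- Let lo < hi be natural numbers and let b be a natural number. Then lo ≤ b < hi if and only if there exists a natural number j with 2^j ≤ hi − lo such that the dyadic interval of size 2^j containing b, namely Ico (2^j·(b / 2^j)) (2^j·(b / 2^j) + 2^j), is a maximal dyadic interval contained in [lo, hi). -/

import Mathlib

/-- A dyadic interval of naturals: `{x : m·2^j ≤ x < (m+1)·2^j}`. -/
def IsDyadic (I : Set ℕ) : Prop :=
  ∃ m j : ℕ, I = Set.Ico (m * 2 ^ j) ((m + 1) * 2 ^ j)

/-- A dyadic interval maximal inside `[lo, hi)`. -/
def IsMaxDyadic (lo hi : ℕ) (I : Set ℕ) : Prop :=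
  IsDyadic I ∧ I ⊆ Set.Ico lo hi ∧
    ∀ J : Set ℕ, IsDyadic J → I ⊂ J → ¬ J ⊆ Set.Ico lo hi

/-!
The dyadic intervals containing `b` form a chain `B 0 ⊆ B 1 ⊆ ⋯`, where `B k` is the block of
size `2^k` around `b`. If `b ∈ [lo, hi)`, then `B 0 = {b}` lies in `[lo, hi)` and the blocks
inside `[lo, hi)` have bounded size, so there is a last `j` with `B j ⊆ [lo, hi)`. Any dyadic
interval strictly containing `B j` contains `b`, hence is some `B k` with `k > j`, and so
contains `B (j + 1) ⊄ [lo, hi)`: `B j` is maximal.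
-/

def dyadicBlock (k b : ℕ) : Set ℕ :=
  Set.Ico (2 ^ k * (b / 2 ^ k)) (2 ^ k * (b / 2 ^ k) + 2 ^ k)

theorem mem_dyadicBlock_iff {k b x : ℕ} : x ∈ dyadicBlock k b ↔ x / 2 ^ k = b / 2 ^ k := by
  have hpos : 0 < 2 ^ k := Nat.two_pow_pos k
  constructor
  · rintro ⟨hlo, hhi⟩
    exact Nat.div_eq_of_lt_le (by rwa [mul_comm] at hlo) (by rw [Nat.succ_mul]; linarith)
  · intro hx
    have := Nat.div_add_mod x (2 ^ k)
    have := Nat.mod_lt x hpos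
    rw [dyadicBlock, ← hx]
    constructor <;> omega

theorem self_mem_dyadicBlock (k b : ℕ) : b ∈ dyadicBlock k b :=
  mem_dyadicBlock_iff.2 rfl

theorem dyadicBlock_mono (b : ℕ) {k k' : ℕ} (hk : k ≤ k') :
    dyadicBlock k b ⊆ dyadicBlock k' b := by
  intro x hx
  rw [mem_dyadicBlock_iff] at hx ⊢
  obtain ⟨d, rfl⟩ := Nat.exists_eq_add_of_le hk
  rw [pow_add, ← Nat.div_div_eq_div_mul, ← Nat.div_div_eq_div_mul, hx]

theorem isDyadic_dyadicBlock (k b : ℕ) : IsDyadic (dyadicBlock k b) :=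
  ⟨b / 2 ^ k, k, by rw [dyadicBlock, Nat.succ_mul, mul_comm]⟩

theorem IsDyadic.eq_dyadicBlock {J : Set ℕ} (hJ : IsDyadic J) {b : ℕ} (hb : b ∈ J) :
    ∃ k, J = dyadicBlock k b := by
  obtain ⟨m, k, rfl⟩ := hJ
  have hm : b / 2 ^ k = m := Nat.div_eq_of_lt_le hb.1 hb.2
  exact ⟨k, by rw [dyadicBlock, hm, Nat.succ_mul, mul_comm]⟩

theorem two_pow_le_of_dyadicBlock_subset {k b lo hi : ℕ}
    (h : dyadicBlock k b ⊆ Set.Ico lo hi) : 2 ^ k ≤ hi - lo := by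
  have hpos : 0 < 2 ^ k := Nat.two_pow_pos k
  obtain ⟨hlo, hhi⟩ := (Set.Ico_subset_Ico_iff (by omega)).1 h
  omega

theorem isMaxDyadic_dyadicBlock {j b lo hi : ℕ} (hj : dyadicBlock j b ⊆ Set.Ico lo hi)
    (hj' : ¬ dyadicBlock (j + 1) b ⊆ Set.Ico lo hi) :
    IsMaxDyadic lo hi (dyadicBlock j b) := by
  refine ⟨isDyadic_dyadicBlock j b, hj, fun J hJ hjJ hJsub => ?_⟩
  obtain ⟨k, rfl⟩ := hJ.eq_dyadicBlock (hjJ.subset (self_mem_dyadicBlock j b))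
  rcases le_or_gt k j with hkj | hjk
  · exact hjJ.not_subset (dyadicBlock_mono b hkj)
  · exact hj' ((dyadicBlock_mono b hjk).trans hJsub)

theorem exists_isMaxDyadic_dyadicBlock {lo hi b : ℕ} (hb : b ∈ Set.Ico lo hi) :
    ∃ j, 2 ^ j ≤ hi - lo ∧ IsMaxDyadic lo hi (dyadicBlock j b) := by
  classical
  let P k := dyadicBlock k b ⊆ Set.Ico lo hi
  have hP0 : P 0 := by
    intro x hx
    rw [mem_dyadicBlock_iff, pow_zero, Nat.div_one, Nat.div_one] at hx
    rwa [hx]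
  have hP_le : ∀ k, P k → k ≤ hi := fun k hk =>
    (Nat.lt_two_pow_self.trans_le (two_pow_le_of_dyadicBlock_subset hk)).le.trans (Nat.sub_le _ _)
  set j := Nat.findGreatest P hi
  have hPj : P j := Nat.findGreatest_spec (Nat.zero_le hi) hP0
  have hPj' : ¬ P (j + 1) := fun h =>
    Nat.findGreatest_is_greatest (Nat.lt_succ_self j) (hP_le _ h) h
  exact ⟨j, two_pow_le_of_dyadicBlock_subset hPj, isMaxDyadic_dyadicBlock hPj hPj'⟩

theorem stmt_14_general (lo hi : ℕ) (b : ℕ) :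
    (lo ≤ b ∧ b < hi) ↔
      ∃ j : ℕ, 2 ^ j ≤ hi - lo ∧
        IsMaxDyadic lo hi
          (Set.Ico (2 ^ j * (b / 2 ^ j)) (2 ^ j * (b / 2 ^ j) + 2 ^ j)) :=
  ⟨exists_isMaxDyadic_dyadicBlock, fun ⟨j, _, _, hsub, _⟩ => hsub (self_mem_dyadicBlock j b)⟩

/-- Correctness of the integer DA-PSI membership test: `lo ≤ b < hi` iff for
some `j` with `2^j ≤ hi − lo`, the size-`2^j` dyadic interval containing `b`
is a maximal dyadic interval of `[lo, hi)`. -/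
theorem stmt_14 (lo hi : ℕ) (h : lo < hi) (b : ℕ) :
    (lo ≤ b ∧ b < hi) ↔
      ∃ j : ℕ, 2 ^ j ≤ hi - lo ∧
        IsMaxDyadic lo hi
          (Set.Ico (2 ^ j * (b / 2 ^ j)) (2 ^ j * (b / 2 ^ j) + 2 ^ j)) :=
  stmt_14_general lo hi b
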